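/- (Gentle measurement lemma.) Let ρ be a density operator on a finite-dimensional complex Hilbert space H, and let X be a positive semidefinite operator on H with X ≤ 1 (identity) and 1 − Tr(ρX) ≤ ε < 1. Then ‖ρ − √X ρ √X‖₁ ≤ √(8ε), where √X is the positive semidefinite square root of X. -/

import Mathlib

/-! With `Y = √X` and `R = 1 - Y` one has `ρ - YρY = Rρ + YρR`. Pairing this Hermitian matrix
with its sign `S` (a self-adjoint unitary) gives its trace norm, and Cauchy–Schwarz for the
semi-inner product `⟪P, Q⟫ = Tr (Q ρ Pᴴ)` bounds each of the two terms by `√Tr (RρR)`, using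
`Tr ρ = 1` and `Tr (YρY) = Tr (ρX) ≤ 1`. Finally `(1 - √x)² ≤ 1 - x` on `[0, 1]` gives
`R² ≤ 1 - X`, hence `Tr (RρR) ≤ 1 - Tr (ρX) ≤ ε` and the bound `2√ε ≤ √(8ε)`. -/

open scoped ComplexOrder
noncomputable section

/-- The positive semidefinite square root of a positive semidefinite matrix
(the definition removed from Mathlib, restored verbatim). -/
def Matrix.PosSemidef.sqrt {n : Type*} {𝕜 : Type*} [Fintype n] [RCLike 𝕜] [DecidableEq n]
    {A : Matrix n n 𝕜} (hA : A.PosSemidef) : Matrix n n 𝕜 :=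
  hA.1.eigenvectorUnitary.1 * Matrix.diagonal ((↑) ∘ (√·) ∘ hA.1.eigenvalues) *
  (star hA.1.eigenvectorUnitary : Matrix n n 𝕜)

def traceNorm {n : Type*} [Fintype n] [DecidableEq n] (A : Matrix n n ℂ) : ℝ :=
  ((Matrix.posSemidef_conjTranspose_mul_self A).sqrt).trace.re

def IsDensity {n : Type*} [Fintype n] (ρ : Matrix n n ℂ) : Prop :=
  ρ.PosSemidef ∧ ρ.trace = 1

open scoped MatrixOrder

namespace Matrix

variable {n : Type*} [Fintype n]

lemma PosSemidef.sqrt_eq_cfc [DecidableEq n] {A : Matrix n n ℂ} (hA : A.PosSemidef) :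
    hA.sqrt = cfc Real.sqrt A := by
  rw [hA.1.cfc_eq]; rfl

lemma PosSemidef.sqrt_mul_self [DecidableEq n] {A : Matrix n n ℂ} (hA : A.PosSemidef) :
    hA.sqrt * hA.sqrt = A := by
  rw [hA.sqrt_eq_cfc, ← cfc_mul ..]
  conv_rhs => rw [← cfc_id' ℝ A hA.isHermitian.isSelfAdjoint]
  exact cfc_congr fun x hx => Real.mul_self_sqrt (spectrum_nonneg_of_nonneg hA.nonneg hx)

lemma PosSemidef.isHermitian_sqrt [DecidableEq n] {A : Matrix n n ℂ} (hA : A.PosSemidef) :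
    hA.sqrt.IsHermitian := by
  rw [hA.sqrt_eq_cfc]
  exact cfc_predicate _ A

lemma PosSemidef.one_sub_sqrt_mul_self_le [DecidableEq n] {X : Matrix n n ℂ} (hX : X.PosSemidef)
    (hX1 : X ≤ 1) : (1 - hX.sqrt) * (1 - hX.sqrt) ≤ 1 - X := by
  have hsa : IsSelfAdjoint X := hX.isHermitian.isSelfAdjoint
  calc (1 - hX.sqrt) * (1 - hX.sqrt) = cfc (fun x : ℝ => (1 - √x) * (1 - √x)) X := by
        rw [cfc_mul .., cfc_sub (fun _ => 1) Real.sqrt X, cfc_const_one ℝ X, hX.sqrt_eq_cfc]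
    _ ≤ cfc (fun x : ℝ => 1 - x) X := by
        refine cfc_mono fun x hx => ?_
        have h0 : 0 ≤ x := spectrum_nonneg_of_nonneg hX.nonneg hx
        have h1 : x ≤ 1 := (CFC.le_one_iff X).mp hX1 x hx
        nlinarith [Real.sq_sqrt h0, Real.sqrt_le_one.mpr h1, Real.sqrt_nonneg x]
    _ = 1 - X := by rw [cfc_sub (fun _ => 1) (fun x => x) X, cfc_const_one ℝ X, cfc_id' ℝ X]

lemma PosSemidef.re_trace_mul_mul_le {ρ : Matrix n n ℂ} (hρ : ρ.PosSemidef) (P Q : Matrix n n ℂ) :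
    (P * ρ * Q).trace.re ≤ √(P * ρ * Pᴴ).trace.re * √(Qᴴ * ρ * Q).trace.re := by
  let _ := ρ.toMatrixSeminormedAddCommGroup hρ
  let _ := ρ.toMatrixInnerProductSpace hρ
  have h := re_inner_le_norm (𝕜 := ℂ) Qᴴ P
  rw [norm_eq_sqrt_re_inner (𝕜 := ℂ), norm_eq_sqrt_re_inner (𝕜 := ℂ), mul_comm] at h
  change (P * ρ * Qᴴᴴ).trace.re ≤ √(P * ρ * Pᴴ).trace.re * √(Qᴴ * ρ * Qᴴᴴ).trace.re at h
  rwa [conjTranspose_conjTranspose] at h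

lemma PosSemidef.re_trace_mul_le_of_le {ρ A B : Matrix n n ℂ} (hρ : ρ.PosSemidef)
    (hAB : A ≤ B) :
    (A * ρ).trace.re ≤ (B * ρ).trace.re := by
  classical
  obtain ⟨C, hC⟩ := CStarAlgebra.nonneg_iff_eq_star_mul_self.mp (sub_nonneg.mpr hAB)
  have h := (hρ.mul_mul_conjTranspose_same C).trace_nonneg
  rw [← sub_nonneg, ← Complex.sub_re, ← trace_sub, ← sub_mul, hC, star_eq_conjTranspose,
    mul_assoc, trace_mul_comm]
  exact (RCLike.nonneg_iff.mp h).1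

lemma IsHermitian.exists_traceNorm_eq [DecidableEq n] {A : Matrix n n ℂ} (hA : A.IsHermitian) :
    ∃ S : Matrix n n ℂ, Sᴴ * S = 1 ∧ traceNorm A = (S * A).trace.re := by
  have hsa : IsSelfAdjoint A := hA.isSelfAdjoint
  have hcont (f : ℝ → ℝ) : ContinuousOn f (spectrum ℝ A) := A.finite_real_spectrum.continuousOn f
  let sgn : ℝ → ℝ := fun x => if 0 ≤ x then 1 else -1
  refine ⟨cfc sgn A, ?_, ?_⟩
  · rw [← star_eq_conjTranspose, (cfc_predicate sgn A).star_eq,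
      ← cfc_mul sgn sgn A (hcont _) (hcont _), ← cfc_const_one ℝ A]
    exact cfc_congr fun (x : ℝ) _ => by by_cases hx : 0 ≤ x <;> simp [sgn, hx]
  · have habs : (posSemidef_conjTranspose_mul_self A).sqrt = cfc (fun x : ℝ => |x|) A := by
      rw [PosSemidef.sqrt_eq_cfc, hA.eq, ← sq, ← cfc_comp_pow _ _ _]
      exact cfc_congr fun x _ => Real.sqrt_sq_eq_abs x
    have hsgn : cfc sgn A * A = cfc (fun x : ℝ => |x|) A := by
      nth_rw 2 [← cfc_id' ℝ A]
      rw [← cfc_mul sgn _ A (hcont _) (hcont _)]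
      exact cfc_congr fun (x : ℝ) _ => by
        by_cases hx : 0 ≤ x
        · simp [sgn, hx, abs_of_nonneg hx]
        · simp [sgn, hx, abs_of_neg (not_le.mp hx)]
    rw [traceNorm, habs, hsgn]

lemma trace_mul_mul_conjTranspose_of_unitary [DecidableEq n] {S : Matrix n n ℂ}
    (hS : Sᴴ * S = 1) (M : Matrix n n ℂ) :
    (S * M * Sᴴ).trace = M.trace := by
  rw [mul_assoc, trace_mul_comm, mul_assoc, hS, mul_one]

lemma traceNorm_sub_mul_mul_le [DecidableEq n] {ρ Y : Matrix n n ℂ} (hρ : ρ.PosSemidef)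
    (hY : Y.IsHermitian) :
    traceNorm (ρ - Y * ρ * Y) ≤
      √((1 - Y) * ρ * (1 - Y)).trace.re * (√ρ.trace.re + √(Y * ρ * Y).trace.re) := by
  have hΔ : (ρ - Y * ρ * Y).IsHermitian := by
    simpa only [hY.eq] using
      hρ.isHermitian.sub (isHermitian_mul_mul_conjTranspose Y hρ.isHermitian)
  obtain ⟨S, hS, hnorm⟩ := hΔ.exists_traceNorm_eq
  have hR : (1 - Y)ᴴ = 1 - Y := by rw [conjTranspose_sub, conjTranspose_one, hY.eq]
  have hconj (M : Matrix n n ℂ) : (S * M * ρ * (S * M)ᴴ).trace = (M * ρ * Mᴴ).trace := by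
    rw [conjTranspose_mul, ← trace_mul_mul_conjTranspose_of_unitary hS (M * ρ * Mᴴ)]
    simp only [mul_assoc]
  have h₁ := hρ.re_trace_mul_mul_le (S * (1 - Y)) 1
  have h₂ := hρ.re_trace_mul_mul_le (S * Y) (1 - Y)
  rw [hconj, hR] at h₁ h₂
  rw [hY.eq] at h₂
  simp only [conjTranspose_one, one_mul, mul_one] at h₁ h₂
  have hsplit : S * (ρ - Y * ρ * Y) = S * (1 - Y) * ρ + S * Y * ρ * (1 - Y) := by noncomm_ring
  rw [hnorm, hsplit, trace_add, Complex.add_re]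
  linarith

end Matrix

open Matrix in
theorem gentle_measurement_general {d : ℕ} (ρ X : Matrix (Fin d) (Fin d) ℂ)
    (hρ : IsDensity ρ) (hX : X.PosSemidef) (hX1 : (1 - X).PosSemidef)
    (ε : ℝ) (h : 1 - ((ρ * X).trace).re ≤ ε) :
    traceNorm (ρ - hX.sqrt * ρ * hX.sqrt) ≤ Real.sqrt (8 * ε) := by
  obtain ⟨hρ, htr⟩ := hρ
  have hX_le : X ≤ 1 := le_iff.mpr hX1
  have htr_re : ρ.trace.re = 1 := by simp [htr]
  have hXρ : (hX.sqrt * ρ * hX.sqrt).trace.re = (ρ * X).trace.re := by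
    rw [trace_mul_comm, ← mul_assoc, hX.sqrt_mul_self, trace_mul_comm]
  have hXρ_le : (ρ * X).trace.re ≤ 1 := by
    simpa [trace_mul_comm ρ, htr_re] using hρ.re_trace_mul_le_of_le hX_le
  have hRρ : ((1 - hX.sqrt) * ρ * (1 - hX.sqrt)).trace.re ≤ ε := by
    have := hρ.re_trace_mul_le_of_le (hX.one_sub_sqrt_mul_self_le hX_le)
    rw [sub_mul 1 X ρ, one_mul, trace_sub, Complex.sub_re, htr_re, trace_mul_comm X] at this
    rw [trace_mul_comm, ← mul_assoc]
    linarith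
  calc traceNorm (ρ - hX.sqrt * ρ * hX.sqrt)
      ≤ √((1 - hX.sqrt) * ρ * (1 - hX.sqrt)).trace.re * (√ρ.trace.re + √(ρ * X).trace.re) := by
        simpa only [hXρ] using traceNorm_sub_mul_mul_le hρ hX.isHermitian_sqrt
    _ ≤ √ε * 2 := by
        rw [htr_re, Real.sqrt_one]
        gcongr
        linarith [Real.sqrt_le_one.mpr hXρ_le]
    _ ≤ √(8 * ε) := by
        rw [mul_comm, Real.le_sqrt (by positivity) (by linarith), mul_pow,
          Real.sq_sqrt (by linarith)]
        linarith

theorem gentle_measurement {d : ℕ} (ρ X : Matrix (Fin d) (Fin d) ℂ)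
    (hρ : IsDensity ρ) (hX : X.PosSemidef) (hX1 : (1 - X).PosSemidef)
    (ε : ℝ) (hε : ε < 1) (h : 1 - ((ρ * X).trace).re ≤ ε) :
    traceNorm (ρ - hX.sqrt * ρ * hX.sqrt) ≤ Real.sqrt (8 * ε) :=
  gentle_measurement_general ρ X hρ hX hX1 ε h
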